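/- arXiv:0906.4986 — 4 statements merged into one kernel-verified Lean document; each statement's English description precedes it below -/
import Mathlib

section
/- For the scalar ODE u' = -u · (Σ_i b_i p_i^0 u^{d_i}) / (Σ_i p_i^0 u^{d_i}) with u(0) = 1, where all p_i^0 > 0, all b_i > 0, d_i ≥ 0 and at least one d_i = 0, the solution satisfies u(t) → 0 as t → ∞; i.e., the origin is a globally asymptotically stable equilibrium on (0,∞). -/
/-!
Since `u > 0`, the factor `(Σ bᵢ pᵢ⁰ u^{dᵢ}) / (Σ pᵢ⁰ u^{dᵢ})` is an average of the `bᵢ` with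
positive weights, so it is at least `β = minᵢ bᵢ > 0`. Hence `u' ≤ -β u`, and comparison with
the linear equation (`u e^{βt}` is antitone) gives `0 < u t ≤ e^{-βt} → 0`.
-/

open Filter Topology Real

theorem le_sum_mul_div_sum {ι : Type*} {s : Finset ι} {f w : ι → ℝ} {c : ℝ}
    (hw : ∀ i ∈ s, 0 ≤ w i) (hw_sum : 0 < ∑ i ∈ s, w i) (hc : ∀ i ∈ s, c ≤ f i) :
    c ≤ (∑ i ∈ s, f i * w i) / ∑ i ∈ s, w i := by
  rw [le_div_iff₀ hw_sum, Finset.mul_sum]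
  exact Finset.sum_le_sum fun i hi => mul_le_mul_of_nonneg_right (hc i hi) (hw i hi)

theorem le_mul_exp_of_hasDerivAt_le {f f' : ℝ → ℝ} {β : ℝ}
    (hf : ∀ t, HasDerivAt f (f' t) t) (hle : ∀ t, f' t ≤ β * f t) {t : ℝ} (ht : 0 ≤ t) :
    f t ≤ f 0 * exp (β * t) := by
  set g : ℝ → ℝ := fun t => f t * exp (-β * t)
  have hg : ∀ t, HasDerivAt g ((f' t - β * f t) * exp (-β * t)) t := fun t =>
    ((hf t).fun_mul ((hasDerivAt_id' t).const_mul (-β)).exp).congr_deriv (by ring)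
  have hg_anti : Antitone g := by
    refine antitone_of_deriv_nonpos (fun t => (hg t).differentiableAt) fun t => ?_
    rw [(hg t).deriv]
    exact mul_nonpos_of_nonpos_of_nonneg (sub_nonpos.2 (hle t)) (exp_pos _).le
  have hgt : f t * exp (-β * t) ≤ f 0 := by simpa [g] using hg_anti ht
  calc f t = f t * exp (-β * t) * exp (β * t) := by
        rw [mul_assoc, ← exp_add, neg_mul, neg_add_cancel, exp_zero, mul_one]
    _ ≤ f 0 * exp (β * t) := mul_le_mul_of_nonneg_right hgt (exp_pos _).le

theorem rank_one_escort_tendsto_zero_general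
    (n : ℕ) (hn : 0 < n) (b p0 d : Fin n → ℝ)
    (hb : ∀ i, 0 < b i) (hp0 : ∀ i, 0 < p0 i)
    (u : ℝ → ℝ) (hu0 : u 0 = 1) (hupos : ∀ t, 0 < u t)
    (hode : ∀ t, HasDerivAt u
      (-(u t) * (∑ i, b i * p0 i * u t ^ d i) / (∑ i, p0 i * u t ^ d i)) t) :
    Tendsto u atTop (𝓝 0) := by
  have hne : (Finset.univ : Finset (Fin n)).Nonempty := ⟨⟨0, hn⟩, Finset.mem_univ _⟩
  set β : ℝ := Finset.univ.inf' hne b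
  have hβ : 0 < β := (Finset.lt_inf'_iff hne).2 fun i _ => hb i
  have hrate : ∀ t, -(u t) * (∑ i, b i * p0 i * u t ^ d i) / (∑ i, p0 i * u t ^ d i)
      ≤ -β * u t := fun t => by
    have hw : ∀ i, 0 < p0 i * u t ^ d i := fun i =>
      mul_pos (hp0 i) (rpow_pos_of_pos (hupos t) _)
    have havg : β ≤ (∑ i, b i * p0 i * u t ^ d i) / ∑ i, p0 i * u t ^ d i := by
      simpa only [mul_assoc] using le_sum_mul_div_sum (fun i _ => (hw i).le)
        (Finset.sum_pos (fun i _ => hw i) hne) fun i _ => Finset.inf'_le b (Finset.mem_univ i)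
    rw [mul_div_assoc]
    nlinarith [hupos t]
  have hbound : ∀ᶠ t in atTop, u t ≤ exp (-β * t) := by
    filter_upwards [eventually_ge_atTop 0] with t ht
    simpa [hu0] using le_mul_exp_of_hasDerivAt_le hode hrate ht
  have hexp : Tendsto (fun t => exp (-β * t)) atTop (𝓝 0) :=
    tendsto_exp_atBot.comp ((tendsto_const_mul_atBot_of_neg (neg_lt_zero.2 hβ)).2 tendsto_id)
  exact tendsto_of_tendsto_of_tendsto_of_le_of_le' tendsto_const_nhds hexp
    (Eventually.of_forall fun t => (hupos t).le) hbound

/-- The rank-1 escort ODE `u' = -u (Σ bᵢ pᵢ⁰ u^{dᵢ})/(Σ pᵢ⁰ u^{dᵢ})` with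
positive `bᵢ`, `pᵢ⁰`, nonnegative `dᵢ` and some `dᵢ = 0`: solutions starting at
`u(0) = 1` tend to `0`, i.e. the origin is globally asymptotically stable on `(0,∞)`. -/
theorem rank_one_escort_tendsto_zero
    (n : ℕ) (hn : 0 < n) (b p0 d : Fin n → ℝ)
    (hb : ∀ i, 0 < b i) (hp0 : ∀ i, 0 < p0 i) (hd : ∀ i, 0 ≤ d i)
    (hd0 : ∃ i, d i = 0)
    (u : ℝ → ℝ) (hu0 : u 0 = 1) (hupos : ∀ t, 0 < u t)
    (hode : ∀ t, HasDerivAt u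
      (-(u t) * (∑ i, b i * p0 i * u t ^ d i) / (∑ i, p0 i * u t ^ d i)) t) :
    Tendsto u atTop (𝓝 0) :=
  rank_one_escort_tendsto_zero_general n hn b p0 d hb hp0 u hu0 hupos hode
end

section
/- If in the rank-1 escort equation u' = -u·(Σ_{i∈I} b_i p_i^0 + Σ_{i∉I} b_i p_i^0 u^{d_i})/(Σ_{i∈I} p_i^0 + Σ_{i∉I} p_i^0 u^{d_i}) (with d_i > 0 for i ∉ I) the parameters satisfy ξ_1 = Σ_{i∈I} b_i p_i^0 < 0 and ξ_2 = Σ_i b_i p_i^0 > 0, then there exists an equilibrium û ∈ (0,1) of the equation (i.e., a root of Σ_i b_i p_i^0 u^{d_i} = 0 in (0,1)), and the equilibrium u = 0 is unstable. -/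
/-- If `ξ₁ = Σ_{i∈I} bᵢ pᵢ⁰ < 0` and `ξ₂ = Σᵢ bᵢ pᵢ⁰ > 0`, then the rank-1
escort equation has an equilibrium `û ∈ (0,1)` (a root of `Σᵢ bᵢ pᵢ⁰ u^{dᵢ} = 0`),
and the equilibrium `u = 0` is unstable: the vector field is strictly positive
on a punctured right neighbourhood of `0`. -/
theorem rank_one_escort_interior_root_and_zero_unstable
    (n : ℕ) (a b p0 : Fin n → ℝ) (i0 : Fin n) (hmax : ∀ j, a j ≤ a i0)
    (d : Fin n → ℝ) (hd : ∀ i, d i = a i0 - a i)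
    (hp0 : ∀ i, 0 < p0 i)
    (hxi1 : ∑ i ∈ Finset.univ.filter (fun i => d i = 0), b i * p0 i < 0)
    (hxi2 : 0 < ∑ i, b i * p0 i) :
    (∃ uhat : ℝ, uhat ∈ Set.Ioo (0:ℝ) 1 ∧ ∑ i, b i * p0 i * uhat ^ d i = 0) ∧
    ∃ δ > (0:ℝ), ∀ u ∈ Set.Ioo (0:ℝ) δ,
      0 < -u * (∑ i, b i * p0 i * u ^ d i) / (∑ i, p0 i * u ^ d i) := by
  have hdnn : ∀ i, 0 ≤ d i := fun i => by rw [hd i]; linarith [hmax i]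
  set g : ℝ → ℝ := fun u => ∑ i, b i * p0 i * u ^ d i with hg
  have hcont : Continuous g := by
    apply continuous_finset_sum
    intro i _
    exact continuous_const.mul (continuous_iff_continuousAt.2 fun x =>
      Real.continuousAt_rpow_const x (d i) (Or.inr (hdnn i)))
  have hg0 : g 0 = ∑ i ∈ Finset.univ.filter (fun i => d i = 0), b i * p0 i := by
    rw [Finset.sum_filter]
    apply Finset.sum_congr rfl
    intro i _
    by_cases h : d i = 0
    · simp [h]
    · simp [h, Real.zero_rpow h]
  have hg1 : g 1 = ∑ i, b i * p0 i := by
    simp [hg, Real.one_rpow]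
  have hroot : ∃ uhat : ℝ, uhat ∈ Set.Ioo (0:ℝ) 1 ∧ g uhat = 0 := by
    have h := intermediate_value_Ioo (le_of_lt one_pos) hcont.continuousOn
      (a := (0:ℝ)) (b := 1)
    have hmem : (0:ℝ) ∈ Set.Ioo (g 0) (g 1) := by
      constructor
      · rw [hg0]; exact hxi1
      · rw [hg1]; exact hxi2
    obtain ⟨x, hx, hgx⟩ := h hmem
    exact ⟨x, hx, hgx⟩
  refine ⟨hroot, ?_⟩
  -- instability: g is negative near 0
  have hneg : g 0 < 0 := by rw [hg0]; exact hxi1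
  have := (hcont.continuousAt (x := 0)).eventually_lt_const hneg
  rw [Metric.eventually_nhds_iff] at this
  obtain ⟨δ, hδ, hδ'⟩ := this
  refine ⟨δ, hδ, ?_⟩
  intro u hu
  have hgu : g u < 0 := by
    apply hδ'
    simp only [Real.dist_eq, sub_zero]
    rw [abs_of_pos hu.1]
    exact hu.2
  have hden : 0 < ∑ i, p0 i * u ^ d i := by
    apply Finset.sum_pos
    · intro i _
      exact mul_pos (hp0 i) (Real.rpow_pos_of_pos hu.1 _)
    · exact ⟨i0, Finset.mem_univ i0⟩
  apply div_pos _ hden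
  have : (0:ℝ) < (-u) * g u → (0:ℝ) < -u * ∑ i, b i * p0 i * u ^ d i := fun h => h
  apply this
  exact mul_pos_of_neg_of_neg (by linarith [hu.1]) hgu
end

section
/- Let s(t) solve the one-dimensional escort ODE ds/dt = d/ds[ln M_0(s)], s(0) = 0, where M_0(s) = Σ_i p_i^0 e^{s m_i}, p_i^0 > 0, and the m_i are distinct reals. Then the replicator frequencies defined by p_i(t) = p_i^0 e^{m_i s(t)} / Σ_j p_j^0 e^{m_j s(t)} solve the replicator equation dp_i/dt = p_i (m_i E_t[m] − (E_t[m])²), where E_t[m] = Σ_j m_j p_j(t). -/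
/-!
Along the escort solution the frequencies are the Gibbs distribution `pᵢ⁰ e^{mᵢ θ} / Z(θ)` of the
exponential family with sufficient statistic `m`, evaluated at `θ = s(t)`. Differentiating in `θ`
gives `pᵢ (mᵢ - E[m])`, and the escort equation says precisely that `s' = (log Z)' = E[m]`, so the
chain rule produces the replicator field `pᵢ (mᵢ E[m] - E[m]²)`.
-/

open Real Finset

noncomputable section

namespace ExpFamily

variable {ι : Type*} [Fintype ι] (w m : ι → ℝ)

def partitionFn (θ : ℝ) : ℝ := ∑ j, w j * exp (m j * θ)

def gibbs (θ : ℝ) (i : ι) : ℝ := w i * exp (m i * θ) / partitionFn w m θ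

variable {w m}

theorem partitionFn_pos [Nonempty ι] (hw : ∀ j, 0 < w j) (θ : ℝ) : 0 < partitionFn w m θ :=
  sum_pos (fun j _ => mul_pos (hw j) (exp_pos _)) univ_nonempty

theorem hasDerivAt_mul_exp_mul (a b θ : ℝ) :
    HasDerivAt (fun θ => a * exp (b * θ)) (b * a * exp (b * θ)) θ := by
  simpa [mul_comm, mul_left_comm, mul_assoc] using (((hasDerivAt_id θ).const_mul b).exp).const_mul a

theorem hasDerivAt_partitionFn (θ : ℝ) :
    HasDerivAt (partitionFn w m) (∑ j, m j * w j * exp (m j * θ)) θ :=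
  HasDerivAt.fun_sum fun j _ => hasDerivAt_mul_exp_mul (w j) (m j) θ

theorem sum_mul_gibbs (θ : ℝ) :
    ∑ j, m j * gibbs w m θ j = (∑ j, m j * w j * exp (m j * θ)) / partitionFn w m θ := by
  simp only [gibbs, sum_div, mul_div_assoc, mul_assoc]

theorem hasDerivAt_gibbs {θ : ℝ} (hZ : partitionFn w m θ ≠ 0) (i : ι) :
    HasDerivAt (fun θ => gibbs w m θ i) (gibbs w m θ i * (m i - ∑ j, m j * gibbs w m θ j)) θ := by
  refine ((hasDerivAt_mul_exp_mul (w i) (m i) θ).div (hasDerivAt_partitionFn θ) hZ).congr_deriv ?_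
  rw [sum_mul_gibbs, gibbs]
  field_simp

end ExpFamily

open ExpFamily in
theorem escort_solution_solves_multiplicative_replicator_general
    (n : ℕ) (m p0 : Fin n → ℝ) (hp0 : ∀ i, 0 < p0 i)
    (s : ℝ → ℝ)
    (hode : ∀ t, HasDerivAt s
      ((∑ i, m i * p0 i * Real.exp (s t * m i)) / (∑ i, p0 i * Real.exp (s t * m i))) t)
    (p : ℝ → Fin n → ℝ)
    (hp : ∀ t i, p t i = p0 i * Real.exp (m i * s t) / ∑ j, p0 j * Real.exp (m j * s t)) :
    ∀ t i, HasDerivAt (fun τ => p τ i)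
      (p t i * (m i * (∑ j, m j * p t j) - (∑ j, m j * p t j) ^ 2)) t := by
  intro t i
  have : Nonempty (Fin n) := ⟨i⟩
  obtain rfl : p = fun τ => gibbs p0 m (s τ) := funext fun τ => funext (hp τ)
  have hmean : HasDerivAt s (∑ j, m j * gibbs p0 m (s t) j) t := by
    simpa only [sum_mul_gibbs, partitionFn, mul_comm (s t)] using hode t
  exact (hasDerivAt_gibbs (m := m) (partitionFn_pos hp0 (s t)).ne' i).comp t hmean
    |>.congr_deriv (by ring)

/-- Reduction formula: if `s(t)` solves the scalar escort ODE
`s' = (d/ds) ln M₀(s)` with `M₀(s) = Σᵢ pᵢ⁰ e^{s mᵢ}` and `s(0) = 0`, then the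
exponential-family frequencies `pᵢ(t) = pᵢ⁰ e^{mᵢ s(t)}/Σⱼ pⱼ⁰ e^{mⱼ s(t)}`
solve the replicator equation with multiplicative fitness. -/
theorem escort_solution_solves_multiplicative_replicator
    (n : ℕ) (m p0 : Fin n → ℝ) (hp0 : ∀ i, 0 < p0 i) (hsum : ∑ i, p0 i = 1)
    (hm : Function.Injective m)
    (s : ℝ → ℝ) (hs0 : s 0 = 0)
    (hode : ∀ t, HasDerivAt s
      ((∑ i, m i * p0 i * Real.exp (s t * m i)) / (∑ i, p0 i * Real.exp (s t * m i))) t)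
    (p : ℝ → Fin n → ℝ)
    (hp : ∀ t i, p t i = p0 i * Real.exp (m i * s t) / ∑ j, p0 j * Real.exp (m j * s t)) :
    ∀ t i, HasDerivAt (fun τ => p τ i)
      (p t i * (m i * (∑ j, m j * p t j) - (∑ j, m j * p t j) ^ 2)) t :=
  escort_solution_solves_multiplicative_replicator_general n m p0 hp0 s hode p hp
end
end

section
/- If C > 0 satisfies Φ(C) = p_1^0 (b_1 − α) C^{d_1} + p_2^0 (b_2 − α) C^{d_2} = 0 with b_1 ≠ b_2, p_1^0, p_2^0 > 0, then the limit frequencies p_1^∞ = p_1^0 C^{d_1}/(p_1^0 C^{d_1} + p_2^0 C^{d_2}) and p_2^∞ = p_2^0 C^{d_2}/(p_1^0 C^{d_1} + p_2^0 C^{d_2}) equal p_1^∞ = (α − b_2)/(b_1 − b_2) and p_2^∞ = (α − b_1)/(b_2 − b_1), independently of the initial weights p_1^0, p_2^0; moreover Φ has a positive root if and only if α lies strictly between b_1 and b_2 (given d_1 ≠ d_2). -/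
/-!
A positive root `C` of `Φ` makes `x = p₁⁰ C^{d₁}` and `y = p₂⁰ C^{d₂}` positive weights with
`x (b₁ - α) + y (b₂ - α) = 0`, i.e. `α` is the weighted mean of `b₁` and `b₂`; this pins down
the weights `x / (x + y)` and forces `α` strictly between `b₁` and `b₂`. Conversely, if
`(b₁ - α)(b₂ - α) < 0`, the equation `Φ(C) = 0` reads `C^{d₁ - d₂} = r` for some `r > 0`,
which `C = r^{1/(d₁ - d₂)}` solves.
-/

open Real

lemma div_add_eq_of_mul_sub_add_mul_sub_eq_zero {K : Type*} [Field K] {x y b₁ b₂ α : K} (hxy : x + y ≠ 0)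
    (hb : b₁ ≠ b₂) (h : x * (b₁ - α) + y * (b₂ - α) = 0) :
    x / (x + y) = (α - b₂) / (b₁ - b₂) := by
  rw [div_eq_div_iff hxy (sub_ne_zero.mpr hb)]
  linear_combination h

section OrderedRing

variable {R : Type*} [CommRing R] [LinearOrder R] [IsStrictOrderedRing R]

lemma mul_neg_of_mul_add_mul_eq_zero {x y u v : R} (hx : 0 < x) (hy : 0 < y) (huv : u ≠ v)
    (h : x * u + y * v = 0) : u * v < 0 := by
  have hu : u ≠ 0 := by
    rintro rfl
    have hyv : y * v = 0 := by linarith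
    exact huv ((mul_eq_zero.mp hyv).resolve_left hy.ne').symm
  have hyuv : y * (u * v) = -(x * u ^ 2) := by linear_combination u * h
  exact neg_of_mul_neg_right (by rw [hyuv]; simp only [neg_lt_zero]; positivity) hy.le

lemma sub_mul_sub_neg_iff_lt_and_lt_or_lt_and_lt {b₁ b₂ α : R} :
    (b₁ - α) * (b₂ - α) < 0 ↔ (b₁ < α ∧ α < b₂) ∨ (b₂ < α ∧ α < b₁) := by
  rw [mul_neg_iff, sub_pos, sub_neg, sub_pos, sub_neg]
  tauto

end OrderedRing

lemma exists_pos_mul_rpow_add_mul_rpow_eq_zero {a c d₁ d₂ : ℝ} (hac : a * c < 0)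
    (hd : d₁ ≠ d₂) : ∃ C : ℝ, 0 < C ∧ a * C ^ d₁ + c * C ^ d₂ = 0 := by
  have ha : a ≠ 0 := left_ne_zero_of_mul hac.ne
  have hr : 0 < -c / a := by
    rw [show -c / a = -(a * c) / a ^ 2 by field_simp]
    exact div_pos (neg_pos.mpr hac) (by positivity)
  set C := (-c / a) ^ (d₁ - d₂)⁻¹
  have hC : 0 < C := rpow_pos_of_pos hr _
  have hCd : C ^ d₁ = -c / a * C ^ d₂ := by
    rw [← rpow_inv_rpow hr.le (sub_ne_zero.mpr hd), ← rpow_add hC, sub_add_cancel]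
  refine ⟨C, hC, ?_⟩
  rw [hCd]
  field_simp
  ring

theorem two_species_limit_equilibrium_general
    (b1 b2 α d1 d2 p10 p20 : ℝ) (hb : b1 ≠ b2) (hd : d1 ≠ d2)
    (hp1 : 0 < p10) (hp2 : 0 < p20) :
    (∀ C : ℝ, 0 < C → p10 * (b1 - α) * C ^ d1 + p20 * (b2 - α) * C ^ d2 = 0 →
      p10 * C ^ d1 / (p10 * C ^ d1 + p20 * C ^ d2) = (α - b2) / (b1 - b2) ∧
      p20 * C ^ d2 / (p10 * C ^ d1 + p20 * C ^ d2) = (α - b1) / (b2 - b1)) ∧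
    ((∃ C : ℝ, 0 < C ∧ p10 * (b1 - α) * C ^ d1 + p20 * (b2 - α) * C ^ d2 = 0) ↔
      (b1 < α ∧ α < b2) ∨ (b2 < α ∧ α < b1)) := by
  refine ⟨fun C hC hΦ => ?_, ?_⟩
  · have hx : 0 < p10 * C ^ d1 := mul_pos hp1 (rpow_pos_of_pos hC d1)
    have hy : 0 < p20 * C ^ d2 := mul_pos hp2 (rpow_pos_of_pos hC d2)
    refine ⟨div_add_eq_of_mul_sub_add_mul_sub_eq_zero (by positivity) hb
      (by linear_combination hΦ), ?_⟩
    rw [add_comm]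
    exact div_add_eq_of_mul_sub_add_mul_sub_eq_zero (by positivity) hb.symm
      (by linear_combination hΦ)
  rw [← sub_mul_sub_neg_iff_lt_and_lt_or_lt_and_lt]
  constructor
  · rintro ⟨C, hC, hΦ⟩
    exact mul_neg_of_mul_add_mul_eq_zero (mul_pos hp1 (rpow_pos_of_pos hC d1))
      (mul_pos hp2 (rpow_pos_of_pos hC d2)) (sub_left_injective.ne hb) (by linear_combination hΦ)
  · intro h
    have hac : p10 * (b1 - α) * (p20 * (b2 - α)) < 0 := by
      rw [mul_mul_mul_comm]
      exact mul_neg_of_pos_of_neg (mul_pos hp1 hp2) h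
    exact exists_pos_mul_rpow_add_mul_rpow_eq_zero hac hd

/-- If `C > 0` is a root of `Φ(C) = p₁⁰(b₁−α)C^{d₁} + p₂⁰(b₂−α)C^{d₂}`, then
the limit frequencies `p₁^∞ = p₁⁰C^{d₁}/(p₁⁰C^{d₁}+p₂⁰C^{d₂})` and
`p₂^∞ = p₂⁰C^{d₂}/(p₁⁰C^{d₁}+p₂⁰C^{d₂})` equal `(α−b₂)/(b₁−b₂)` and
`(α−b₁)/(b₂−b₁)`, independently of `p₁⁰, p₂⁰`; moreover (for `d₁ ≠ d₂`) `Φ` has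
a positive root iff `α` lies strictly between `b₁` and `b₂`. -/
theorem two_species_limit_equilibrium
    (b1 b2 α d1 d2 p10 p20 : ℝ) (hb : b1 ≠ b2) (hd : d1 ≠ d2)
    (hd1 : 0 ≤ d1) (hd2 : 0 ≤ d2) (hp1 : 0 < p10) (hp2 : 0 < p20) :
    (∀ C : ℝ, 0 < C → p10 * (b1 - α) * C ^ d1 + p20 * (b2 - α) * C ^ d2 = 0 →
      p10 * C ^ d1 / (p10 * C ^ d1 + p20 * C ^ d2) = (α - b2) / (b1 - b2) ∧
      p20 * C ^ d2 / (p10 * C ^ d1 + p20 * C ^ d2) = (α - b1) / (b2 - b1)) ∧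
    ((∃ C : ℝ, 0 < C ∧ p10 * (b1 - α) * C ^ d1 + p20 * (b2 - α) * C ^ d2 = 0) ↔
      (b1 < α ∧ α < b2) ∨ (b2 < α ∧ α < b1)) :=
  two_species_limit_equilibrium_general b1 b2 α d1 d2 p10 p20 hb hd hp1 hp2
end
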